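/- (Baumgartner) Let λ be an uncountable regular cardinal and F = {i_{αβ} : B_α → B_β : α ≤ β < λ} be a complete iteration system such that B_α is <λ-cc for every α < λ, and such that the set S = {α < λ : ⋃_{β<α} i_{βα}[B_β] is dense in B_α} (i.e. B_α is the boolean completion of the direct limit C(F↾α)) is stationary in λ. Then C(F) is <λ-cc. -/

import Mathlib

/-- A complete iteration system of complete Boolean algebras indexed by `ι`:
regular embeddings `emb : B a → B b` for `a ≤ b` (injective Boolean algebra
homomorphisms preserving arbitrary suprema) which commute and are the identity
on the diagonal. -/
structure IterSys (ι : Type*) [Preorder ι] where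
  B : ι → Type
  cba : ∀ a, CompleteBooleanAlgebra (B a)
  emb : ∀ {a b : ι}, a ≤ b → B a → B b
  emb_refl : ∀ (a : ι) (x : B a), emb (le_refl a) x = x
  emb_trans : ∀ {a b c : ι} (hab : a ≤ b) (hbc : b ≤ c) (x : B a),
    emb hbc (emb hab x) = emb (hab.trans hbc) x
  emb_inj : ∀ {a b : ι} (h : a ≤ b), Function.Injective (emb h)
  emb_sSup : ∀ {a b : ι} (h : a ≤ b) (S : Set (B a)), emb h (sSup S) = sSup (emb h '' S)
  emb_inf : ∀ {a b : ι} (h : a ≤ b) (x y : B a), emb h (x ⊓ y) = emb h x ⊓ emb h y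
  emb_compl : ∀ {a b : ι} (h : a ≤ b) (x : B a), emb h xᶜ = (emb h x)ᶜ
  emb_top : ∀ {a b : ι} (h : a ≤ b), emb h (⊤ : B a) = (⊤ : B b)

attribute [instance] IterSys.cba

namespace IterSys

variable {ι : Type*} [Preorder ι] (F : IterSys ι)

/-- The retraction `π_{a b}` associated to the regular embedding `i_{a b}`. -/
def ret {a b : ι} (h : a ≤ b) (c : F.B b) : F.B a :=
  sInf {x : F.B a | c ≤ F.emb h x}

/-- A thread of the iteration system (an element of the inverse limit `T(F)`). -/
def IsThread (f : ∀ a, F.B a) : Prop :=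
  ∀ {a b : ι} (h : a ≤ b), F.ret h (f b) = f a

/-- A constant thread (an element of the direct limit `C(F)`). -/
def IsConstThread (f : ∀ a, F.B a) : Prop :=
  F.IsThread f ∧ ∃ a : ι, ∀ (b : ι) (h : a ≤ b), f b = F.emb h (f a)

/-- The pointwise order on threads. -/
def ThreadLE (f g : ∀ a, F.B a) : Prop := ∀ a, f a ≤ g a

/-- A thread is nonzero if some (equivalently, cofinally many) of its coordinates
are nonzero. -/
def NonzeroThread (f : ∀ a, F.B a) : Prop := ∃ a, f a ≠ ⊥

/-- Two threads are compatible in `T(F)` if some nonzero thread lies below both. -/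
def Compat (f g : ∀ a, F.B a) : Prop :=
  ∃ h, F.IsThread h ∧ F.NonzeroThread h ∧ F.ThreadLE h f ∧ F.ThreadLE h g

/-- Two constant threads are compatible in `C(F)` if some nonzero constant thread
lies below both. -/
def ConstCompat (f g : ∀ a, F.B a) : Prop :=
  ∃ h, F.IsConstThread h ∧ F.NonzeroThread h ∧ F.ThreadLE h f ∧ F.ThreadLE h g

end IterSys

/-- A club subset of a (well-ordered) index set: cofinal, and closed under existing
least upper bounds of its nonempty subsets. -/
def IsClubIn {ι : Type*} [LinearOrder ι] (C : Set ι) : Prop :=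
  (∀ x : ι, ∃ y ∈ C, x ≤ y) ∧
  ∀ T ⊆ C, T.Nonempty → ∀ z : ι, IsLUB T z → z ∈ C

/-- A stationary subset of the index set: one meeting every club. -/
def IsStationaryIn {ι : Type*} [LinearOrder ι] (S : Set ι) : Prop :=
  ∀ C : Set ι, IsClubIn C → (S ∩ C).Nonempty

/-!
Suppose `A` were an antichain of `κ` nonzero constant threads, enumerated injectively as
`(f δ)_{δ < κ}`. On the stationary set of those `δ ∈ S` that bound the supports of all `f j`,
`j < δ`, density of the earlier algebras in `B δ` gives `β δ < δ` and a nonzero `y δ ∈ B (β δ)`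
whose image lies below `f δ δ`. By Fodor's lemma `β` takes a single value `γ` on an unbounded
set, and the `κ`-chain condition of `B γ` makes two of these `y δ`, `y δ'` (`δ < δ'`) compatible.
Since `f δ` has stabilised by stage `δ'`, the threads `f δ` and `f δ'` then meet at stage `δ'`,
and the constant thread generated by that meet lies below both.
-/

open Cardinal Set

namespace IterSys

section Retraction

variable {ι : Type*} [Preorder ι] (F : IterSys ι) {a b : ι} (h : a ≤ b)

lemma emb_le_emb_iff {x y : F.B a} : F.emb h x ≤ F.emb h y ↔ x ≤ y := by
  simp only [← inf_eq_left, ← F.emb_inf, (F.emb_inj h).eq_iff]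

lemma emb_mono : Monotone (F.emb h) := fun _ _ => (F.emb_le_emb_iff h).2

lemma emb_bot : F.emb h ⊥ = ⊥ := by
  simpa using F.emb_sSup h ∅

lemma emb_ne_bot {x : F.B a} (hx : x ≠ ⊥) : F.emb h x ≠ ⊥ :=
  fun h0 => hx (F.emb_inj h (h0.trans (F.emb_bot h).symm))

lemma emb_sInf (S : Set (F.B a)) : F.emb h (sInf S) = sInf (F.emb h '' S) := by
  apply compl_injective
  have hc : F.emb h ∘ compl = compl ∘ F.emb h := funext (F.emb_compl h)
  rw [← F.emb_compl, compl_sInf', compl_sInf', F.emb_sSup, ← image_comp, ← image_comp, hc]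

lemma gc_ret_emb : GaloisConnection (F.ret h) (F.emb h) := by
  refine fun c x => ⟨fun hle => le_trans ?_ (F.emb_mono h hle), fun hle => sInf_le hle⟩
  rw [ret, F.emb_sInf]
  exact le_sInf (by rintro _ ⟨y, hy, rfl⟩; exact hy)

lemma ret_emb (x : F.B a) : F.ret h (F.emb h x) = x :=
  le_antisymm ((F.gc_ret_emb h).l_u_le x) (le_sInf fun _ hy => (F.emb_le_emb_iff h).1 hy)

lemma ret_refl (a : ι) (x : F.B a) : F.ret le_rfl x = x := by
  simpa only [F.emb_refl] using F.ret_emb le_rfl x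

lemma ret_ret {c : ι} (hbc : b ≤ c) (z : F.B c) :
    F.ret h (F.ret hbc z) = F.ret (h.trans hbc) z :=
  ((F.gc_ret_emb hbc).compose (F.gc_ret_emb h)).l_unique (F.gc_ret_emb (h.trans hbc))
    fun x => F.emb_trans h hbc x

lemma ret_ne_bot {c : F.B b} (hc : c ≠ ⊥) : F.ret h c ≠ ⊥ := fun h0 =>
  hc (le_bot_iff.1 (((F.gc_ret_emb h).le_u_l c).trans (by rw [h0, F.emb_bot])))

lemma emb_inf_ne_bot_of_le_ret {c : F.B a} {d : F.B b} (hc : c ≠ ⊥) (hcd : c ≤ F.ret h d) :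
    F.emb h c ⊓ d ≠ ⊥ := by
  intro h0
  have hd : d ≤ F.emb h cᶜ := by
    rw [F.emb_compl]
    exact le_compl_iff_disjoint_left.2 (disjoint_iff.2 h0)
  exact hc (le_compl_self.1 (hcd.trans ((F.gc_ret_emb h).l_le hd)))

end Retraction

section Threads

variable {ι : Type*} [Preorder ι] (F : IterSys ι)

/-- `⋃_{b < a} i_{b a}[B b]` is dense in `B a`; the set `S` of the theorem. -/
def DenseBelow (a : ι) : Prop :=
  ∀ x : F.B a, x ≠ ⊥ → ∃ b : ι, ∃ hb : b < a, ∃ y : F.B b,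
    F.emb hb.le y ≠ ⊥ ∧ F.emb hb.le y ≤ x

/-- The support of `f` is at most `a`. -/
def IsConstFrom (f : ∀ a, F.B a) (a : ι) : Prop :=
  ∀ (b : ι) (h : a ≤ b), f b = F.emb h (f a)

variable {F}

lemma IsConstFrom.mono {f : ∀ a, F.B a} {a b : ι} (hf : F.IsConstFrom f a) (hab : a ≤ b) :
    F.IsConstFrom f b := fun c hbc => by
  rw [hf c (hab.trans hbc), hf b hab, F.emb_trans]

lemma IsThread.emb_inf_ne_bot {f : ∀ a, F.B a} (hf : F.IsThread f) {a b : ι} (h : a ≤ b)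
    {c : F.B a} (hc : c ≠ ⊥) (hcf : c ≤ f a) : F.emb h c ⊓ f b ≠ ⊥ :=
  F.emb_inf_ne_bot_of_le_ret h hc (hcf.trans_eq (hf h).symm)

lemma IsConstFrom.inf_ne_bot {f g : ∀ a, F.B a} {a b : ι} (hf : F.IsConstFrom f a)
    (hg : F.IsThread g) (h : a ≤ b) (hfg : f a ⊓ g a ≠ ⊥) : f b ⊓ g b ≠ ⊥ := by
  refine ne_bot_of_le_ne_bot (hg.emb_inf_ne_bot h hfg inf_le_right) ?_
  rw [hf b h]
  exact inf_le_inf_right _ (F.emb_mono h inf_le_left)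

end Threads

section ConstThreads

variable {ι : Type*} [LinearOrder ι] {F : IterSys ι}

lemma IsThread.apply_ne_bot {f : ∀ a, F.B a} (hf : F.IsThread f) (h0 : f ≠ ⊥) (b : ι) :
    f b ≠ ⊥ := by
  obtain ⟨a, ha⟩ : ∃ a, f a ≠ ⊥ := by
    by_contra! h
    exact h0 (funext h)
  rcases le_total a b with hab | hba
  · exact fun hb => ha (by rw [← hf hab, hb, (F.gc_ret_emb hab).l_bot])
  · exact hf hba ▸ F.ret_ne_bot hba ha

variable (F) in
def constThread (a : ι) (w : F.B a) : ∀ b, F.B b := fun b =>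
  if h : a ≤ b then F.emb h w else F.ret (le_of_not_ge h) w

lemma constThread_of_le {a b : ι} (hab : a ≤ b) (w : F.B a) :
    F.constThread a w b = F.emb hab w := dif_pos hab

lemma constThread_self (a : ι) (w : F.B a) : F.constThread a w a = w := by
  rw [constThread_of_le le_rfl, F.emb_refl]

lemma constThread_of_ge {a b : ι} (hba : b ≤ a) (w : F.B a) :
    F.constThread a w b = F.ret hba w := by
  by_cases hab : a ≤ b
  · obtain rfl := le_antisymm hba hab
    rw [constThread_self, F.ret_refl]
  · exact dif_neg hab

lemma isConstThread_constThread (a : ι) (w : F.B a) : F.IsConstThread (F.constThread a w) := by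
  refine ⟨fun {b c} hbc => ?_, a, fun b hab => by rw [constThread_of_le hab, constThread_self]⟩
  rcases le_total a b with hab | hba
  · rw [constThread_of_le (hab.trans hbc), constThread_of_le hab, ← F.emb_trans hab hbc, F.ret_emb]
  rw [constThread_of_ge hba]
  rcases le_total a c with hac | hca
  · rw [constThread_of_le hac, ← F.ret_ret hba hac, F.ret_emb]
  · rw [constThread_of_ge hca, F.ret_ret]

lemma constThread_le {f : ∀ c, F.B c} {a : ι} {w : F.B a} (hf : F.IsThread f)
    (hfa : F.IsConstFrom f a) (hw : w ≤ f a) : F.ThreadLE (F.constThread a w) f := fun c => by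
  rcases le_total a c with hac | hca
  · rw [constThread_of_le hac, hfa c hac]
    exact F.emb_mono hac hw
  · rw [constThread_of_ge hca, ← hf hca]
    exact (F.gc_ret_emb hca).monotone_l hw

lemma constCompat_of_inf_ne_bot {f g : ∀ a, F.B a} {t : ι} (hf : F.IsThread f)
    (hg : F.IsThread g) (hft : F.IsConstFrom f t) (hgt : F.IsConstFrom g t)
    (hfg : f t ⊓ g t ≠ ⊥) : F.ConstCompat f g :=
  ⟨F.constThread t (f t ⊓ g t), isConstThread_constThread t _, ⟨t, by rwa [constThread_self]⟩,
    constThread_le hf hft inf_le_left, constThread_le hg hgt inf_le_right⟩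

lemma constCompat_of_emb_le {f g : ∀ a, F.B a} {γ d d' : ι} (hf : F.IsThread f)
    (hfd' : F.IsConstFrom f d') (hg : F.IsConstThread g) (hγd : γ ≤ d) (hdd' : d ≤ d')
    {y y' : F.B γ} (hyy' : y ⊓ y' ≠ ⊥) (hy : F.emb hγd y ≤ f d)
    (hy' : F.emb (hγd.trans hdd') y' ≤ g d') : F.ConstCompat f g := by
  obtain ⟨s, hs⟩ : ∃ s, F.IsConstFrom g s := hg.2
  have hmeet : F.emb (hγd.trans hdd') (y ⊓ y') ⊓ f d' ≠ ⊥ := by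
    have := hf.emb_inf_ne_bot hdd' (F.emb_ne_bot hγd hyy')
      ((F.emb_mono hγd inf_le_left).trans hy)
    rwa [F.emb_trans] at this
  have hd' : f d' ⊓ g d' ≠ ⊥ := ne_bot_of_le_ne_bot hmeet
    (le_inf inf_le_right (inf_le_left.trans ((F.emb_mono _ inf_le_right).trans hy')))
  exact constCompat_of_inf_ne_bot hf hg.1 (hfd'.mono (le_max_right s d'))
    (hs.mono (le_max_left s d')) (hfd'.inf_ne_bot hg.1 (le_max_right s d') hd')

end ConstThreads

end IterSys

section Clubs

variable {ι : Type*} [LinearOrder ι]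

lemma exists_forall_lt_of_mk_lt_cof {T : Set ι} (hT : #T < Order.cof ι) : ∃ x, ∀ t ∈ T, t < x :=
  not_isCofinal_iff.1 fun hcof => (Order.cof_le hcof).not_gt hT

lemma IsLUB.range_of_interleave {u v : ℕ → ι} {z : ι} (hz : IsLUB (range u) z)
    (huv : ∀ n, u n ≤ v n) (hvu : ∀ n, v n ≤ u (n + 1)) : IsLUB (range v) z :=
  ⟨by rintro _ ⟨n, rfl⟩; exact (hvu n).trans (hz.1 ⟨n + 1, rfl⟩),
    fun _ hw => hz.2 (by rintro _ ⟨n, rfl⟩; exact (huv n).trans (hw ⟨n, rfl⟩))⟩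

variable [WellFoundedLT ι]

lemma exists_isLUB_of_bddAbove {T : Set ι} (hT : BddAbove T) : ∃ z, IsLUB T z := by
  obtain ⟨z, hz, hmin⟩ := wellFounded_lt.has_min (upperBounds T) hT
  exact ⟨z, hz, fun v hv => not_lt.1 (hmin v hv)⟩

variable (hcof : ℵ₀ < Order.cof ι)
include hcof

lemma exists_isLUB_range (u : ℕ → ι) : ∃ z, IsLUB (range u) z := by
  obtain ⟨x, hx⟩ := exists_forall_lt_of_mk_lt_cof ((countable_range u).le_aleph0.trans_lt hcof)
  exact exists_isLUB_of_bddAbove ⟨x, fun t ht => (hx t ht).le⟩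

lemma IsClubIn.inter {C D : Set ι} (hC : IsClubIn C) (hD : IsClubIn D) : IsClubIn (C ∩ D) := by
  refine ⟨fun x => ?_, fun T hT hne z hz =>
    ⟨hC.2 T (fun t ht => (hT ht).1) hne z hz, hD.2 T (fun t ht => (hT ht).2) hne z hz⟩⟩
  choose φ hφC hφ using hC.1
  choose ψ hψD hψ using hD.1
  let u : ℕ → ι := fun n => (ψ ∘ φ)^[n] x
  have hu : ∀ n, ψ (φ (u n)) = u (n + 1) := fun n =>
    (Function.iterate_succ_apply' (ψ ∘ φ) n x).symm
  obtain ⟨z, hz⟩ := exists_isLUB_range hcof u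
  have hzφ : IsLUB (range (φ ∘ u)) z :=
    hz.range_of_interleave (fun n => hφ _) fun n => (hψ _).trans_eq (hu n)
  have hzψ : IsLUB (range (ψ ∘ φ ∘ u)) z :=
    hzφ.range_of_interleave (fun n => hψ _) fun n => (hu n).trans_le (hφ _)
  refine ⟨z, ⟨hC.2 _ (by rintro _ ⟨n, rfl⟩; exact hφC _) (range_nonempty _) z hzφ,
    hD.2 _ (by rintro _ ⟨n, rfl⟩; exact hψD _) (range_nonempty _) z hzψ⟩, hz.1 ⟨0, rfl⟩⟩

lemma IsStationaryIn.inter_isClubIn {S C : Set ι} (hS : IsStationaryIn S) (hC : IsClubIn C) :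
    IsStationaryIn (S ∩ C) := fun D hD => by
  simpa only [inter_assoc] using hS _ (hC.inter hcof hD)

end Clubs

section Stationary

variable {ι : Type*} [LinearOrder ι] [WellFoundedLT ι]
  (hcof : ℵ₀ < Order.cof ι) (hIic : ∀ w : ι, #(Iic w) < Order.cof ι)
include hcof hIic

lemma isClubIn_setOf_forall_lt (g : ι → ι) : IsClubIn {δ | ∀ j < δ, g j < δ} := by
  refine ⟨fun x => ?_, fun T hT _ z hz j hj => ?_⟩
  · have hnext (w : ι) : ∃ v, ∀ j ≤ w, g j < v := by
      obtain ⟨v, hv⟩ := exists_forall_lt_of_mk_lt_cof (mk_image_le.trans_lt (hIic w))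
      exact ⟨v, fun j hj => hv _ ⟨j, hj, rfl⟩⟩
    choose nxt hnxt using hnext
    obtain ⟨z, hz⟩ := exists_isLUB_range hcof fun n => nxt^[n] x
    refine ⟨z, fun j hj => ?_, hz.1 ⟨0, rfl⟩⟩
    obtain ⟨_, ⟨n, rfl⟩, hjn⟩ := (lt_isLUB_iff hz).1 hj
    exact (hnxt _ j hjn.le).trans_le (hz.1 ⟨n + 1, Function.iterate_succ_apply' nxt n x⟩)
  · obtain ⟨t, ht, hjt⟩ := (lt_isLUB_iff hz).1 hj
    exact (hT ht j hjt).trans_le (hz.1 ht)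

/-- Fodor's lemma, in the weak form that some fibre of a regressive function is unbounded. -/
lemma IsStationaryIn.exists_isCofinal_fiber {S : Set ι} (hS : IsStationaryIn S) (b : ι → ι)
    (hb : ∀ δ ∈ S, b δ < δ) : ∃ γ, IsCofinal {δ ∈ S | b δ = γ} := by
  by_contra! h
  choose β hβ using fun γ => not_isCofinal_iff.1 (h γ)
  obtain ⟨δ, hδS, hδ⟩ := hS _ (isClubIn_setOf_forall_lt hcof hIic β)
  exact (hβ (b δ) δ ⟨hδS, rfl⟩).asymm (hδ _ (hb δ hδS))

end Stationary

section Cardinals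

universe u

lemma mk_Iic_lt {ι : Type*} [LinearOrder ι] {κ : Cardinal} (hκ : ℵ₀ ≤ κ)
    (hinit : ∀ x : ι, #{y : ι // y < x} < κ) (w : ι) : #(Iic w) < κ :=
  Iio_insert (a := w) ▸ mk_insert_le.trans_lt
    (add_lt_of_lt hκ (hinit w) (one_lt_aleph0.trans_le hκ))

lemma cof_eq_of_isRegular {ι : Type*} [LinearOrder ι] {κ : Cardinal} (hreg : κ.IsRegular)
    (hcard : #ι = κ) (hinit : ∀ x : ι, #{y : ι // y < x} < κ) : Order.cof ι = κ := by
  refine le_antisymm (hcard ▸ Order.cof_le_cardinalMk ι) (Order.le_cof_iff.2 fun s hs => ?_)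
  by_contra! hs_lt
  have hcover := (card_biUnion_lt_iff_forall_of_isRegular hreg hs_lt).2
    fun t _ => mk_Iic_lt hreg.aleph0_le hinit t
  rw [isCofinal_iff_iUnion_Iic_eq_univ.1 hs, mk_univ, hcard] at hcover
  exact hcover.false

lemma exists_injective_mem_ne {α β : Type u} {A : Set α} (hA : #β ≤ #A) (hβ : ℵ₀ ≤ #β) (a : α) :
    ∃ f : β → α, Function.Injective f ∧ ∀ i, f i ∈ A ∧ f i ≠ a := by
  have hle : #β ≤ #(A \ {a} : Set α) := by
    by_contra! hlt
    refine (hA.trans (le_mk_sdiff_add_mk A {a})).not_gt ?_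
    rw [mk_singleton]
    exact add_lt_of_lt hβ hlt (one_lt_aleph0.trans_le hβ)
  obtain ⟨e⟩ := (Cardinal.le_def _ _).1 hle
  exact ⟨fun i => e i, Subtype.val_injective.comp e.injective, fun i => (e i).2⟩

lemma exists_lt_inf_ne_bot {α ι : Type u} [Lattice α] [OrderBot α] [LinearOrder ι] {κ : Cardinal}
    (hcc : ∀ A : Set α, (∀ x ∈ A, ∀ y ∈ A, x ≠ y → x ⊓ y = ⊥) → #A < κ) {T : Set ι}
    (hT : κ ≤ #T) (y : ι → α) (hy : ∀ δ ∈ T, y δ ≠ ⊥) :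
    ∃ δ ∈ T, ∃ δ' ∈ T, δ < δ' ∧ y δ ⊓ y δ' ≠ ⊥ := by
  by_contra! h
  have hdisj : ∀ δ ∈ T, ∀ δ' ∈ T, δ ≠ δ' → y δ ⊓ y δ' = ⊥ := fun δ hδ δ' hδ' hne =>
    hne.lt_or_gt.elim (h δ hδ δ' hδ') fun hlt => inf_comm (y δ) _ ▸ h δ' hδ' δ hδ hlt
  have hinj : InjOn y T := fun δ hδ δ' hδ' heq => by
    by_contra hne
    exact hy δ hδ (by simpa [heq] using hdisj δ hδ δ' hδ' hne)
  refine (hcc (y '' T) ?_).not_ge ?_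
  · rintro _ ⟨δ, hδ, rfl⟩ _ ⟨δ', hδ', rfl⟩ hne
    exact hdisj δ hδ δ' hδ' fun h => hne (h ▸ rfl)
  · rwa [mk_image_eq_of_injOn _ _ hinj]

end Cardinals

namespace IterSys

variable {ι : Type} [LinearOrder ι] [WellFoundedLT ι] {F : IterSys ι}

lemma exists_compatible_reflections (hcof : ℵ₀ < Order.cof ι)
    (hIic : ∀ w : ι, #(Iic w) < Order.cof ι)
    (hcc : ∀ (a : ι) (A : Set (F.B a)),
      (∀ x ∈ A, ∀ y ∈ A, x ≠ y → x ⊓ y = ⊥) → #A < Order.cof ι)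
    {S : Set ι} (hS : IsStationaryIn S) (hdense : ∀ δ ∈ S, F.DenseBelow δ)
    (x : ∀ δ, F.B δ) (hx : ∀ δ ∈ S, x δ ≠ ⊥) :
    ∃ γ δ δ', ∃ (hγδ : γ ≤ δ) (hδδ' : δ < δ'), δ ∈ S ∧ δ' ∈ S ∧ ∃ y y' : F.B γ,
      y ⊓ y' ≠ ⊥ ∧ F.emb hγδ y ≤ x δ ∧ F.emb (hγδ.trans hδδ'.le) y' ≤ x δ' := by
  have hreflect (δ : ι) : ∃ b, δ ∈ S → ∃ hb : b < δ, ∃ y : F.B b,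
      F.emb hb.le y ≠ ⊥ ∧ F.emb hb.le y ≤ x δ := by
    by_cases hδ : δ ∈ S
    · obtain ⟨b, hb⟩ := hdense δ hδ (x δ) (hx δ hδ)
      exact ⟨b, fun _ => hb⟩
    · exact ⟨δ, fun h => absurd h hδ⟩
  choose b hb using hreflect
  obtain ⟨γ, hγ⟩ := hS.exists_isCofinal_fiber hcof hIic b fun δ hδ => (hb δ hδ).1
  have hreflectγ (δ : ι) : ∃ y : F.B γ, δ ∈ {δ ∈ S | b δ = γ} →
      ∃ h : γ < δ, F.emb h.le y ≠ ⊥ ∧ F.emb h.le y ≤ x δ := by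
    by_cases hδ : δ ∈ {δ ∈ S | b δ = γ}
    · obtain ⟨hδS, rfl⟩ := hδ
      obtain ⟨hbδ, y, hy⟩ := hb δ hδS
      exact ⟨y, fun _ => ⟨hbδ, hy⟩⟩
    · exact ⟨⊥, fun h => absurd h hδ⟩
  choose y hy using hreflectγ
  obtain ⟨δ, hδ, δ', hδ', hδδ', hyy'⟩ := exists_lt_inf_ne_bot (hcc γ) (Order.cof_le hγ) y
    fun δ hδ h0 => (hy δ hδ).2.1 (by rw [h0, F.emb_bot])
  obtain ⟨hγδ, -, hyδ⟩ := hy δ hδ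
  obtain ⟨_, -, hyδ'⟩ := hy δ' hδ'
  exact ⟨γ, δ, δ', hγδ.le, hδδ', hδ.1, hδ'.1, y δ, y δ', hyy', hyδ, hyδ'⟩

end IterSys

/-- `λ` is realized as a well-order `ι` of cardinality `κ` whose proper initial segments have
size `< κ`, and `C(F)` is identified with the set of constant threads. -/
theorem stmt10 (ι : Type) [LinearOrder ι] [WellFoundedLT ι]
    (κ : Cardinal) (hreg : κ.IsRegular) (hunc : Cardinal.aleph0 < κ)
    (hcard : Cardinal.mk ι = κ)
    (hinit : ∀ x : ι, Cardinal.mk {y : ι // y < x} < κ)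
    (F : IterSys ι)
    (hccB : ∀ (a : ι) (A : Set (F.B a)),
      (∀ x ∈ A, ∀ y ∈ A, x ≠ y → x ⊓ y = ⊥) → Cardinal.mk A < κ)
    (hstat : IsStationaryIn {a : ι | ∀ x : F.B a, x ≠ ⊥ →
      ∃ b : ι, ∃ hb : b < a, ∃ y : F.B b,
        F.emb hb.le y ≠ ⊥ ∧ F.emb hb.le y ≤ x}) :
    ∀ A : Set (∀ a, F.B a), (∀ f ∈ A, F.IsConstThread f) →
      (∀ f ∈ A, ∀ g ∈ A, f ≠ g → ¬ F.ConstCompat f g) → Cardinal.mk A < κ := by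
  intro A hA hanti
  by_contra! hbig
  have hIic := mk_Iic_lt hreg.aleph0_le hinit
  obtain ⟨f, hf_inj, hfA⟩ := exists_injective_mem_ne (hcard.trans_le hbig) (hcard ▸ hunc.le) ⊥
  have hf_ne (δ : ι) : f δ δ ≠ ⊥ := IterSys.IsThread.apply_ne_bot (hA _ (hfA δ).1).1 (hfA δ).2 δ
  choose s hs using fun i => (hA _ (hfA i).1).2
  rw [← cof_eq_of_isRegular hreg hcard hinit] at hunc hIic hccB
  obtain ⟨γ, δ, δ', hγδ, hδδ', hδ, hδ', y, y', hyy', hy, hy'⟩ :=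
    IterSys.exists_compatible_reflections hunc hIic hccB
      (hstat.inter_isClubIn hunc (isClubIn_setOf_forall_lt hunc hIic s)) (fun δ hδ => hδ.1)
      (fun δ => f δ δ) fun δ _ => hf_ne δ
  have hδ_stable : F.IsConstFrom (f δ) δ' := IterSys.IsConstFrom.mono (hs δ) (hδ'.2 δ hδδ').le
  exact hanti _ (hfA δ).1 _ (hfA δ').1 (hf_inj.ne hδδ'.ne) <|
    IterSys.constCompat_of_emb_le (hA _ (hfA δ).1).1 hδ_stable (hA _ (hfA δ').1) hγδ hδδ'.le
      hyy' hy hy'
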